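/- The translation t((1/2)(ε_1 + ⋯ + ε_n)) ∈ GL(F) admits the expression t((1/2)(ε_1 + ⋯ + ε_n)) = π^{B∨} ∘ (s_n ∘ s_{n−1} ∘ ⋯ ∘ s_1) ∘ (s_n ∘ s_{n−1} ∘ ⋯ ∘ s_2) ∘ ⋯ ∘ (s_n ∘ s_{n−1}) ∘ s_n, i.e. π^{B∨} composed with the product over k = 1, 2, …, n (from left to right) of the blocks s_n ∘ s_{n−1} ∘ ⋯ ∘ s_k. -/

import Mathlib

noncomputable section

namespace CvC

/-- Ambient space `F = ℝⁿ ⊕ ℝc`. -/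
abbrev F (n : ℕ) := (Fin n → ℝ) × ℝ

/-- Bilinear form `⟨v + rc, w + sc⟩ = v ⬝ w`. -/
def bform (n : ℕ) (x y : F n) : ℝ := ∑ i, x.1 i * y.1 i

/-- The constant function `c`. -/
def cvec (n : ℕ) : F n := (0, 1)

/-- `eps n i` is the basis vector `ε_i`, for `1 ≤ i ≤ n` (1-based; junk value `0` out of range). -/
def eps (n i : ℕ) : F n :=
  if h : 1 ≤ i ∧ i ≤ n then (Pi.single (⟨i - 1, by omega⟩ : Fin n) 1, 0) else 0

lemma bform_add_left (n : ℕ) (x y z : F n) :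
    bform n (x + y) z = bform n x z + bform n y z := by
  simp [bform, add_mul, Finset.sum_add_distrib]

lemma bform_smul_left (n : ℕ) (c : ℝ) (x z : F n) :
    bform n (c • x) z = c * bform n x z := by
  simp [bform, Finset.mul_sum, mul_assoc]

lemma bform_sub_left (n : ℕ) (x y z : F n) :
    bform n (x - y) z = bform n x z - bform n y z := by
  simp [bform, sub_mul, Finset.sum_sub_distrib]

/-- Reflection `s_f(g) = g − ⟨g, f^∨⟩ f`, `f^∨ = (2/⟨f,f⟩) f`, as a linear endomorphism. -/
def reflMap (n : ℕ) (f : F n) : Module.End ℝ (F n) where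
  toFun g := g - ((2 / bform n f f) * bform n g f) • f
  map_add' x y := by
    try dsimp only
    rw [bform_add_left, mul_add, add_smul]; abel
  map_smul' c x := by
    try dsimp only
    try simp only [RingHom.id_apply]
    rw [bform_smul_left, smul_sub, smul_smul, mul_left_comm]

@[simp] lemma reflMap_apply (n : ℕ) (f g : F n) :
    reflMap n f g = g - ((2 / bform n f f) * bform n g f) • f := rfl

lemma reflMap_invol (n : ℕ) (f : F n) (hf : bform n f f ≠ 0) (g : F n) :
    reflMap n f (reflMap n f g) = g := by
  simp only [reflMap_apply]
  rw [bform_sub_left, bform_smul_left, sub_sub, ← add_smul]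
  have key : (2 / bform n f f) * bform n g f +
      (2 / bform n f f) * (bform n g f - (2 / bform n f f) * bform n g f * bform n f f) = 0 := by
    field_simp
    ring
  rw [key, zero_smul, sub_zero]

/-- Translation `t(v)(f) = f − ⟨f, v⟩c`, as a linear endomorphism. -/
def tMap (n : ℕ) (v : Fin n → ℝ) : Module.End ℝ (F n) where
  toFun g := g - bform n g (v, 0) • cvec n
  map_add' x y := by
    try dsimp only
    rw [bform_add_left, add_smul]; abel
  map_smul' c x := by
    try dsimp only
    try simp only [RingHom.id_apply]
    rw [bform_smul_left, smul_sub, smul_smul]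

@[simp] lemma tMap_apply (n : ℕ) (v : Fin n → ℝ) (g : F n) :
    tMap n v g = g - bform n g (v, 0) • cvec n := rfl

lemma bform_pair_add (n : ℕ) (g : F n) (v w : Fin n → ℝ) :
    bform n g (v + w, 0) = bform n g (v, 0) + bform n g (w, 0) := by
  simp [bform, mul_add, Finset.sum_add_distrib]

lemma tMap_mul (n : ℕ) (v w : Fin n → ℝ) :
    tMap n v * tMap n w = tMap n (v + w) := by
  apply LinearMap.ext; intro g
  rw [Module.End.mul_apply]
  simp only [tMap_apply]
  rw [bform_sub_left, bform_smul_left]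
  have hc : bform n (cvec n) (v, 0) = 0 := by simp [bform, cvec]
  rw [hc, mul_zero, sub_zero, bform_pair_add, add_smul]
  abel

lemma tMap_zero (n : ℕ) : tMap n 0 = 1 := by
  apply LinearMap.ext; intro g
  rw [Module.End.one_apply, tMap_apply]
  have h0 : bform n g ((0 : Fin n → ℝ), 0) = 0 := by simp [bform]
  rw [h0, zero_smul, sub_zero]

/-- Translation `t(v)` as an invertible endomorphism. -/
def tU (n : ℕ) (v : Fin n → ℝ) : (Module.End ℝ (F n))ˣ where
  val := tMap n v
  inv := tMap n (-v)
  val_inv := by rw [tMap_mul, add_neg_cancel, tMap_zero]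
  inv_val := by rw [tMap_mul, neg_add_cancel, tMap_zero]

/-- Reflection `s_f` as an invertible endomorphism (junk value `1` if `⟨f,f⟩ = 0`). -/
def reflE (n : ℕ) (f : F n) : (Module.End ℝ (F n))ˣ :=
  if hf : bform n f f ≠ 0 then
    { val := reflMap n f
      inv := reflMap n f
      val_inv := by
        apply LinearMap.ext; intro g
        rw [Module.End.mul_apply, Module.End.one_apply]
        exact reflMap_invol n f hf g
      inv_val := by
        apply LinearMap.ext; intro g
        rw [Module.End.mul_apply, Module.End.one_apply]
        exact reflMap_invol n f hf g }
  else 1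

/-- The simple affine roots `a_0, a_1, …, a_n` of type `(C_n^∨, C_n)`:
`a_0 = −2ε_1 + c`, `a_j = ε_j − ε_{j+1}` for `1 ≤ j ≤ n−1`, `a_n = 2ε_n`. -/
def aRootF (n k : ℕ) : F n :=
  if k = 0 then (-(2:ℝ)) • eps n 1 + cvec n
  else if k = n then (2:ℝ) • eps n n
  else eps n k - eps n (k + 1)

/-- The generators `s_0, s_1, …, s_n` of the extended affine Weyl group of type
`(C_n^∨, C_n)`: `s_0 = t(ε_1) ∘ s_{2ε_1}` and `s_i = s_{a_i}` for `1 ≤ i ≤ n`. -/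
def sgen (n k : ℕ) : (Module.End ℝ (F n))ˣ :=
  if k = 0 then tU n (eps n 1).1 * reflE n ((2:ℝ) • eps n 1)
  else reflE n (aRootF n k)

/-- The finite Weyl group `W_0 = ⟨s_1, …, s_n⟩` of type `C_n`. -/
def W0grp (n : ℕ) : Subgroup (Module.End ℝ (F n))ˣ :=
  Subgroup.closure (sgen n '' Set.Icc 1 n)

/-- The extended affine Weyl group `W = ⟨s_0, s_1, …, s_n⟩` of type `(C_n^∨, C_n)`. -/
def Wgrp (n : ℕ) : Subgroup (Module.End ℝ (F n))ˣ :=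
  Subgroup.closure (sgen n '' Set.Icc 0 n)

/-- Product of the generators `s_k` along a list of indices. -/
def du (n : ℕ) (l : List ℕ) : (Module.End ℝ (F n))ˣ := (l.map (sgen n)).prod

/-- The weight lattice `P_{C_n} = ℤε_1 ⊕ ⋯ ⊕ ℤε_n` (as a subset of `ℝⁿ`). -/
def PC (n : ℕ) : Set (Fin n → ℝ) := { v | ∀ i, ∃ m : ℤ, v i = m }

/-- The weight lattice `P_{B_n} = P_{C_n} + ℤ·(1/2)(ε_1 + ⋯ + ε_n)` (as a subset of `ℝⁿ`). -/
def PB (n : ℕ) : Set (Fin n → ℝ) := { v | ∃ k : ℤ, ∀ i, ∃ m : ℤ, v i = m + (k : ℝ)/2 }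

/-- `O_1 = {±ε_i + rc}`. -/
def O1 (n : ℕ) : Set (F n) :=
  { x | ∃ i, 1 ≤ i ∧ i ≤ n ∧ ∃ r : ℤ,
      x = eps n i + (r : ℝ) • cvec n ∨ x = -eps n i + (r : ℝ) • cvec n }

/-- `O_2 = {±2ε_i + 2rc}`. -/
def O2 (n : ℕ) : Set (F n) :=
  { x | ∃ i, 1 ≤ i ∧ i ≤ n ∧ ∃ r : ℤ,
      x = (2:ℝ) • eps n i + ((2*r : ℤ) : ℝ) • cvec n ∨
      x = -((2:ℝ) • eps n i) + ((2*r : ℤ) : ℝ) • cvec n }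

/-- `O_3 = {±ε_i + (r + 1/2)c}`. -/
def O3 (n : ℕ) : Set (F n) :=
  { x | ∃ i, 1 ≤ i ∧ i ≤ n ∧ ∃ r : ℤ,
      x = eps n i + ((r : ℝ) + 1/2) • cvec n ∨
      x = -eps n i + ((r : ℝ) + 1/2) • cvec n }

/-- `O_4 = {±2ε_i + (2r+1)c}`. -/
def O4 (n : ℕ) : Set (F n) :=
  { x | ∃ i, 1 ≤ i ∧ i ≤ n ∧ ∃ r : ℤ,
      x = (2:ℝ) • eps n i + ((2*r+1 : ℤ) : ℝ) • cvec n ∨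
      x = -((2:ℝ) • eps n i) + ((2*r+1 : ℤ) : ℝ) • cvec n }

/-- `O_5 = {±ε_i ± ε_j + rc, i < j}`. -/
def O5 (n : ℕ) : Set (F n) :=
  { x | ∃ i j, 1 ≤ i ∧ i < j ∧ j ≤ n ∧ ∃ r : ℤ,
      x = eps n i + eps n j + (r : ℝ) • cvec n ∨
      x = eps n i - eps n j + (r : ℝ) • cvec n ∨
      x = -eps n i + eps n j + (r : ℝ) • cvec n ∨
      x = -eps n i - eps n j + (r : ℝ) • cvec n }

/-- The five `W`-orbits `O_1, …, O_5` of the affine root system of type `(C_n^∨, C_n)`. -/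
def OO (n : ℕ) : Fin 5 → Set (F n) := ![O1 n, O2 n, O3 n, O4 n, O5 n]

/-- The affine root system `S` of type `(C_n^∨, C_n)`. -/
def Sset (n : ℕ) : Set (F n) := O1 n ∪ O2 n ∪ O3 n ∪ O4 n ∪ O5 n

/-- The set `R̃₊ = {ε_i} ∪ {2ε_i} ∪ {ε_i ± ε_j : i < j}`. -/
def Rtplus (n : ℕ) : Set (F n) :=
  { x | (∃ i, 1 ≤ i ∧ i ≤ n ∧ (x = eps n i ∨ x = (2:ℝ) • eps n i)) ∨
        (∃ i j, 1 ≤ i ∧ i < j ∧ j ≤ n ∧ (x = eps n i + eps n j ∨ x = eps n i - eps n j)) }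

/-- The set of positive affine roots `S⁺`. -/
def Splus (n : ℕ) : Set (F n) :=
  { x ∈ Sset n | 0 < x.2 } ∪ (Sset n ∩ Rtplus n)

lemma sum_single_mul (n : ℕ) (j : Fin n) (v : Fin n → ℝ) :
    ∑ k, v k * (Pi.single j 1 : Fin n → ℝ) k = v j := by
  rw [Finset.sum_eq_single j]
  · simp
  · intro k _ hk
    simp [Pi.single_apply, hk]
  · intro h; exact absurd (Finset.mem_univ j) h

lemma bform_eps_right (n : ℕ) (x : F n) (i : ℕ) (h1 : 1 ≤ i) (h2 : i ≤ n) :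
    bform n x (eps n i) = x.1 ⟨i - 1, by omega⟩ := by
  unfold bform eps
  rw [dif_pos ⟨h1, h2⟩]
  exact sum_single_mul n _ x.1

lemma bform_eps_eps (n i : ℕ) (h1 : 1 ≤ i) (h2 : i ≤ n) :
    bform n (eps n i) (eps n i) = 1 := by
  rw [bform_eps_right n _ i h1 h2]
  unfold eps
  rw [dif_pos ⟨h1, h2⟩]
  simp

/-- `π^{C∨} = π^D`: the linear map with `ε_1 ↦ c − ε_1`, `ε_i ↦ ε_i` (`i ≥ 2`), `c ↦ c`. -/
def piCMap (n : ℕ) : Module.End ℝ (F n) where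
  toFun g := g - bform n g (eps n 1) • ((2:ℝ) • eps n 1 - cvec n)
  map_add' x y := by
    try dsimp only
    rw [bform_add_left, add_smul]; abel
  map_smul' c x := by
    try dsimp only
    try simp only [RingHom.id_apply]
    rw [bform_smul_left, smul_sub c, smul_smul]

@[simp] lemma piCMap_apply (n : ℕ) (g : F n) :
    piCMap n g = g - bform n g (eps n 1) • ((2:ℝ) • eps n 1 - cvec n) := rfl

lemma piCMap_invol (n : ℕ) (g : F n) : piCMap n (piCMap n g) = g := by
  rcases Nat.eq_zero_or_pos n with h0 | hpos
  · subst h0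
    have he : eps 0 1 = 0 := by simp [eps]
    simp [piCMap_apply, he, bform]
  · have hE := bform_eps_eps n 1 le_rfl hpos
    have hc : bform n (cvec n) (eps n 1) = 0 := by simp [bform, cvec]
    simp only [piCMap_apply]
    rw [bform_sub_left, bform_smul_left, bform_sub_left, bform_smul_left, hE, hc]
    rw [sub_sub, ← add_smul]
    have key : bform n g (eps n 1) +
        (bform n g (eps n 1) - bform n g (eps n 1) * (2 * 1 - 0)) = 0 := by ring
    rw [key, zero_smul, sub_zero]

/-- `π^{C∨}` as an invertible endomorphism. -/
def piCU (n : ℕ) : (Module.End ℝ (F n))ˣ where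
  val := piCMap n
  inv := piCMap n
  val_inv := by
    apply LinearMap.ext; intro g
    rw [Module.End.mul_apply, Module.End.one_apply]
    exact piCMap_invol n g
  inv_val := by
    apply LinearMap.ext; intro g
    rw [Module.End.mul_apply, Module.End.one_apply]
    exact piCMap_invol n g

/-- `π^{B∨}`: the linear map with `ε_i ↦ (1/2)c − ε_{n−i+1}` and `c ↦ c`. -/
def piBMap (n : ℕ) : Module.End ℝ (F n) where
  toFun g := (fun i => -(g.1 (Fin.rev i)), g.2 + (1/2) * ∑ i, g.1 i)
  map_add' x y := by
    try dsimp only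
    refine Prod.ext ?_ ?_
    · funext i; simp [neg_add]; ring
    · simp [Finset.sum_add_distrib]; ring
  map_smul' c x := by
    try dsimp only
    try simp only [RingHom.id_apply]
    refine Prod.ext ?_ ?_
    · funext i; simp [mul_comm]
    · simp only [Prod.smul_snd, Prod.smul_fst, Pi.smul_apply, smul_eq_mul, Finset.mul_sum,
        mul_add]
      congr 1
      exact Finset.sum_congr rfl fun i _ => by ring

@[simp] lemma piBMap_apply (n : ℕ) (g : F n) :
    piBMap n g = (fun i => -(g.1 (Fin.rev i)), g.2 + (1/2) * ∑ i, g.1 i) := rfl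

lemma piBMap_invol (n : ℕ) (g : F n) : piBMap n (piBMap n g) = g := by
  simp only [piBMap_apply]
  refine Prod.ext ?_ ?_
  · funext i; simp
  · have h : ∑ i, -(g.1 (Fin.rev i)) = -∑ i, g.1 i := by
      rw [← Finset.sum_neg_distrib]
      exact Equiv.sum_comp (Equiv.mk Fin.rev Fin.rev Fin.rev_rev Fin.rev_rev) (fun i => -(g.1 i))
    dsimp only
    rw [h]
    ring

/-- `π^{B∨}` as an invertible endomorphism. -/
def piBU (n : ℕ) : (Module.End ℝ (F n))ˣ where
  val := piBMap n
  inv := piBMap n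
  val_inv := by
    apply LinearMap.ext; intro g
    rw [Module.End.mul_apply, Module.End.one_apply]
    exact piBMap_invol n g
  inv_val := by
    apply LinearMap.ext; intro g
    rw [Module.End.mul_apply, Module.End.one_apply]
    exact piBMap_invol n g

/-- The affine root `a_0^{C∨} = −(ε_1 + ε_2) + c` of Ram–Yip type `C_n^∨`. -/
def a0C (n : ℕ) : F n := -(eps n 1 + eps n 2) + cvec n

/-- The reflection `s_0^{C∨} = s_{a_0^{C∨}}`. -/
def s0C (n : ℕ) : (Module.End ℝ (F n))ˣ := reflE n (a0C n)

/-- The extended affine Weyl group of Ram–Yip type `C_n^∨`: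
`W^{C∨,RY} = ⟨s_0^{C∨}, s_1, …, s_n, π^{C∨}⟩`. -/
def WCRY (n : ℕ) : Subgroup (Module.End ℝ (F n))ˣ :=
  Subgroup.closure ({s0C n, piCU n} ∪ sgen n '' Set.Icc 1 n)

/-- The extended affine Weyl group of Ram–Yip type `B_n^∨`:
`W^{B∨,RY} = ⟨s_0, s_1, …, s_n, π^{B∨}⟩`. -/
def WBRY (n : ℕ) : Subgroup (Module.End ℝ (F n))ˣ :=
  Subgroup.closure (insert (piBU n) (sgen n '' Set.Icc 0 n))

/-- The subgroup generated by `W_0` together with all the translations `t(μ)`, `μ ∈ P_{B_n}`. -/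
def WBtrans (n : ℕ) : Subgroup (Module.End ℝ (F n))ˣ :=
  Subgroup.closure ((sgen n '' Set.Icc 1 n) ∪ (tU n '' PB n))

/-- The defining relators of the extended affine Weyl group of type `(C_n^∨, C_n)`
on the generators `σ_0, …, σ_n`. -/
def rels (n : ℕ) : Set (FreeGroup (Fin (n + 1))) :=
  { r | (∃ i : Fin (n+1), r = FreeGroup.of i * FreeGroup.of i) ∨
        (∃ i j : Fin (n+1), ((i:ℕ) + 1 < (j:ℕ) ∨ (j:ℕ) + 1 < (i:ℕ)) ∧
          r = FreeGroup.of i * FreeGroup.of j * (FreeGroup.of i)⁻¹ * (FreeGroup.of j)⁻¹) ∨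
        (∃ i j : Fin (n+1), 1 ≤ (i:ℕ) ∧ (i:ℕ) ≤ n - 2 ∧ (j:ℕ) = (i:ℕ) + 1 ∧
          r = FreeGroup.of i * FreeGroup.of j * FreeGroup.of i *
              ((FreeGroup.of j)⁻¹ * (FreeGroup.of i)⁻¹ * (FreeGroup.of j)⁻¹)) ∨
        (∃ i j : Fin (n+1), ((i:ℕ) = 0 ∨ (i:ℕ) = n - 1) ∧ (j:ℕ) = (i:ℕ) + 1 ∧
          r = FreeGroup.of i * FreeGroup.of j * FreeGroup.of i * FreeGroup.of j *
              ((FreeGroup.of i)⁻¹ * (FreeGroup.of j)⁻¹ * (FreeGroup.of i)⁻¹ *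
                (FreeGroup.of j)⁻¹)) }



/-! ### Auxiliary lemmas for Statement 12 -/

lemma bform_smul_right (n : ℕ) (c : ℝ) (x y : F n) :
    bform n x (c • y) = c * bform n x y := by
  unfold bform
  rw [Finset.mul_sum]
  refine Finset.sum_congr rfl fun i _ => ?_
  simp only [Prod.smul_fst, Pi.smul_apply, smul_eq_mul]
  ring

lemma bform_sub_right (n : ℕ) (x y z : F n) :
    bform n x (y - z) = bform n x y - bform n x z := by
  simp [bform, mul_sub, Finset.sum_sub_distrib]

lemma eps_fst_apply (n i : ℕ) (h1 : 1 ≤ i) (h2 : i ≤ n) (j : Fin n) :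
    (eps n i).1 j = if (j : ℕ) = i - 1 then 1 else 0 := by
  rw [eps, dif_pos ⟨h1, h2⟩]
  dsimp only
  simp only [Pi.single_apply, Fin.ext_iff]

lemma eps_snd' (n i : ℕ) : (eps n i).2 = 0 := by
  rw [eps]; split <;> rfl

lemma bform_eps_ne (n i j : ℕ) (h1 : 1 ≤ i) (h2 : i ≤ n) (h3 : 1 ≤ j) (h4 : j ≤ n)
    (hij : i ≠ j) : bform n (eps n i) (eps n j) = 0 := by
  rw [bform_eps_right n _ j h3 h4, eps_fst_apply n i h1 h2]
  dsimp only
  rw [if_neg (by omega)]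

lemma du_append (n : ℕ) (l1 l2 : List ℕ) : du n (l1 ++ l2) = du n l1 * du n l2 := by
  simp [du]

lemma du_singleton (n k : ℕ) : du n [k] = sgen n k := by
  simp [du]

lemma sgen_swap_eq (n k : ℕ) (h1 : 1 ≤ k) (h2 : k < n) (g : F n) :
    ((sgen n k).val) g =
      ((fun i : Fin n => if (i : ℕ) + 1 = k then g.1 ⟨k, h2⟩
        else if (i : ℕ) = k then g.1 ⟨k - 1, by omega⟩ else g.1 i), g.2) := by
  have hk0 : k ≠ 0 := by omega
  have hkn : k ≠ n := by omega
  have hroot : aRootF n k = eps n k - eps n (k + 1) := by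
    rw [aRootF, if_neg hk0, if_neg hkn]
  have hbff : bform n (aRootF n k) (aRootF n k) = 2 := by
    rw [hroot, bform_sub_left, bform_sub_right, bform_sub_right,
      bform_eps_eps n k h1 (by omega), bform_eps_eps n (k + 1) (by omega) (by omega),
      bform_eps_ne n k (k + 1) h1 (by omega) (by omega) (by omega) (by omega),
      bform_eps_ne n (k + 1) k (by omega) (by omega) h1 (by omega) (by omega)]
    norm_num
  have hne : bform n (aRootF n k) (aRootF n k) ≠ 0 := by rw [hbff]; norm_num
  rw [sgen, if_neg hk0, reflE, dif_pos hne]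
  show reflMap n (aRootF n k) g = _
  rw [reflMap_apply, hbff]
  have hbg : bform n g (aRootF n k) = g.1 ⟨k - 1, by omega⟩ - g.1 ⟨k, h2⟩ := by
    rw [hroot, bform_sub_right, bform_eps_right n g k h1 (by omega),
      bform_eps_right n g (k + 1) (by omega) (by omega)]
    congr 1
    all_goals exact congrArg g.1 (Fin.ext (by dsimp only; omega))
  rw [hbg, hroot]
  refine Prod.ext ?_ ?_
  · funext i
    dsimp only
    simp only [Prod.fst_sub, Prod.smul_fst, Pi.sub_apply, Pi.smul_apply, smul_eq_mul]
    rw [eps_fst_apply n k h1 (by omega) i, eps_fst_apply n (k + 1) (by omega) (by omega) i]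
    by_cases hik : (i : ℕ) + 1 = k
    · rw [if_pos (show (i : ℕ) = k - 1 by omega),
        if_neg (show ¬ (i : ℕ) = k + 1 - 1 by omega), if_pos hik]
      have hv : g.1 i = g.1 ⟨k - 1, by omega⟩ :=
        congrArg g.1 (Fin.ext (by dsimp only; omega))
      rw [hv]
      ring
    · by_cases hik2 : (i : ℕ) = k
      · rw [if_neg (show ¬ (i : ℕ) = k - 1 by omega),
          if_pos (show (i : ℕ) = k + 1 - 1 by omega), if_neg hik, if_pos hik2]
        have hv : g.1 i = g.1 ⟨k, h2⟩ :=
          congrArg g.1 (Fin.ext (by dsimp only; omega))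
        rw [hv]
        ring
      · rw [if_neg (show ¬ (i : ℕ) = k - 1 by omega),
          if_neg (show ¬ (i : ℕ) = k + 1 - 1 by omega), if_neg hik, if_neg hik2]
        ring
  · dsimp only
    simp only [Prod.snd_sub, Prod.smul_snd, smul_eq_mul, eps_snd']
    ring

lemma sgen_last_eq (n : ℕ) (hn : 1 ≤ n) (g : F n) :
    ((sgen n n).val) g =
      ((fun i : Fin n => if (i : ℕ) + 1 = n then -g.1 i else g.1 i), g.2) := by
  have hroot : aRootF n n = (2 : ℝ) • eps n n := by
    rw [aRootF, if_neg (by omega), if_pos rfl]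
  have hbff : bform n (aRootF n n) (aRootF n n) = 4 := by
    rw [hroot, bform_smul_left, bform_smul_right, bform_eps_eps n n hn le_rfl]
    norm_num
  have hne : bform n (aRootF n n) (aRootF n n) ≠ 0 := by rw [hbff]; norm_num
  rw [sgen, if_neg (by omega), reflE, dif_pos hne]
  show reflMap n (aRootF n n) g = _
  rw [reflMap_apply, hbff]
  have hbg : bform n g (aRootF n n) = 2 * g.1 ⟨n - 1, by omega⟩ := by
    rw [hroot, bform_smul_right, bform_eps_right n g n hn le_rfl]
  rw [hbg, hroot]
  refine Prod.ext ?_ ?_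
  · funext i
    dsimp only
    simp only [Prod.fst_sub, Prod.smul_fst, Pi.sub_apply, Pi.smul_apply, smul_eq_mul]
    rw [eps_fst_apply n n hn le_rfl i]
    by_cases hik : (i : ℕ) + 1 = n
    · rw [if_pos (show (i : ℕ) = n - 1 by omega), if_pos hik]
      have hv : g.1 i = g.1 ⟨n - 1, by omega⟩ :=
        congrArg g.1 (Fin.ext (by dsimp only; omega))
      rw [hv]
      ring
    · rw [if_neg (show ¬ (i : ℕ) = n - 1 by omega), if_neg hik]
      ring
  · dsimp only
    simp only [Prod.snd_sub, Prod.smul_snd, smul_eq_mul, eps_snd', mul_zero]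
    ring

lemma du_block (n : ℕ) : ∀ d m : ℕ, 1 ≤ m → m + d = n → ∀ g : F n,
    ((du n ((List.range' m (n - m + 1)).reverse)).val) g =
      ((fun i : Fin n => if _h : (i : ℕ) + 1 < m then g.1 i
        else if h' : (i : ℕ) + 1 < n then g.1 ⟨(i : ℕ) + 1, h'⟩
        else -g.1 ⟨m - 1, by omega⟩), g.2) := by
  intro d
  induction d with
  | zero =>
    intro m h1 h2 g
    have hm : m = n := by omega
    subst hm
    have hlen : m - m + 1 = 1 := by omega
    rw [hlen]
    have hr : List.range' m 1 = [m] := rfl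
    rw [hr, List.reverse_singleton, du_singleton, sgen_last_eq m h1 g]
    refine Prod.ext ?_ rfl
    funext i
    have hi := i.isLt
    dsimp only
    by_cases hik : (i : ℕ) + 1 = m
    · rw [if_pos hik, dif_neg (by omega), dif_neg (by omega)]
      exact congrArg (fun j => -g.1 j) (Fin.ext (by dsimp only; omega))
    · rw [if_neg hik, dif_pos (by omega)]
  | succ d ih =>
    intro m h1 h2 g
    have hlen : n - m + 1 = d + 2 := by omega
    rw [hlen]
    have hsp : List.range' m (d + 2) = m :: List.range' (m + 1) (d + 1) := by
      rw [List.range'_succ]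
    rw [hsp, List.reverse_cons, du_append, du_singleton, Units.val_mul,
      Module.End.mul_apply, sgen_swap_eq n m h1 (by omega) g]
    have hlen2 : d + 1 = n - (m + 1) + 1 := by omega
    rw [show List.range' (m + 1) (d + 1) = List.range' (m + 1) (n - (m + 1) + 1) from
      by rw [hlen2], ih (m + 1) (by omega) (by omega)]
    refine Prod.ext ?_ rfl
    funext i
    have hi := i.isLt
    dsimp only
    by_cases hc1 : (i : ℕ) + 1 < m + 1
    · rw [dif_pos hc1]
      by_cases hc2 : (i : ℕ) + 1 < m
      · rw [dif_pos hc2, if_neg (by omega), if_neg (by omega)]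
      · rw [dif_neg hc2, dif_pos (show (i : ℕ) + 1 < n by omega),
          if_pos (show (i : ℕ) + 1 = m by omega)]
        exact congrArg g.1 (Fin.ext (by dsimp only; omega))
    · rw [dif_neg hc1, dif_neg (show ¬ (i : ℕ) + 1 < m by omega)]
      by_cases hc2 : (i : ℕ) + 1 < n
      · rw [dif_pos hc2, dif_pos hc2]
        rw [if_neg (show ¬ (i : ℕ) + 1 + 1 = m by omega),
          if_neg (show ¬ (i : ℕ) + 1 = m by omega)]
      · rw [dif_neg hc2, dif_neg hc2]
        rw [if_neg (show ¬ m + 1 - 1 + 1 = m by omega),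
          if_pos (show m + 1 - 1 = m by omega)]

lemma prod_blocks (n : ℕ) : ∀ d m : ℕ, 1 ≤ m → m + d = n + 1 → ∀ g : F n,
    ((((List.range' m d).map
        (fun k => du n ((List.range' k (n - k + 1)).reverse))).prod).val) g =
      ((fun i : Fin n => if h : m ≤ (i : ℕ) + 1
        then -g.1 ⟨n + m - (i : ℕ) - 2, by omega⟩ else g.1 i), g.2) := by
  intro d
  induction d with
  | zero =>
    intro m h1 h2 g
    have hr : List.range' m 0 = [] := rfl
    rw [hr]
    simp only [List.map_nil, List.prod_nil, Units.val_one, Module.End.one_apply]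
    refine Prod.ext ?_ rfl
    funext i
    have hi := i.isLt
    dsimp only
    rw [dif_neg (by omega)]
  | succ d ih =>
    intro m h1 h2 g
    rw [List.range'_succ, List.map_cons, List.prod_cons, Units.val_mul,
      Module.End.mul_apply, ih (m + 1) (by omega) (by omega) g,
      du_block n (n - m) m h1 (by omega)]
    refine Prod.ext ?_ rfl
    funext i
    have hi := i.isLt
    dsimp only
    by_cases hc1 : (i : ℕ) + 1 < m
    · rw [dif_pos hc1, dif_neg (show ¬ m + 1 ≤ (i : ℕ) + 1 by omega),
        dif_neg (show ¬ m ≤ (i : ℕ) + 1 by omega)]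
    · by_cases hc2 : (i : ℕ) + 1 < n
      · rw [dif_neg hc1, dif_pos hc2]
        rw [dif_pos (show m + 1 ≤ (i : ℕ) + 1 + 1 by omega),
          dif_pos (show m ≤ (i : ℕ) + 1 by omega)]
        exact congrArg (fun j => -g.1 j) (Fin.ext (by dsimp only; omega))
      · rw [dif_neg hc1, dif_neg hc2]
        rw [dif_neg (show ¬ m + 1 ≤ m - 1 + 1 by omega),
          dif_pos (show m ≤ (i : ℕ) + 1 by omega)]
        exact congrArg (fun j => -g.1 j) (Fin.ext (by dsimp only; omega))

lemma prod_blocks_one (n : ℕ) (hn : 1 ≤ n) (g : F n) :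
    ((((List.range' 1 n).map
        (fun k => du n ((List.range' k (n - k + 1)).reverse))).prod).val) g =
      ((fun i : Fin n => -g.1 (Fin.rev i)), g.2) := by
  rw [prod_blocks n n 1 le_rfl (by omega) g]
  refine Prod.ext ?_ rfl
  funext i
  have hi := i.isLt
  dsimp only
  rw [dif_pos (show 1 ≤ (i : ℕ) + 1 by omega)]
  refine congrArg (fun j => -g.1 j) (Fin.ext ?_)
  rw [Fin.val_rev]
  dsimp only
  omega

lemma sum_eps_apply (n : ℕ) (k : Fin n) :
    (∑ i ∈ Finset.Icc 1 n, (eps n i).1) k = 1 := by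
  rw [Finset.sum_apply]
  rw [Finset.sum_eq_single_of_mem ((k : ℕ) + 1)
    (by simp only [Finset.mem_Icc]; omega)]
  · rw [eps_fst_apply n ((k : ℕ) + 1) (by omega) (by omega) k, if_pos (by omega)]
  · intro b hb hbk
    simp only [Finset.mem_Icc] at hb
    rw [eps_fst_apply n b hb.1 hb.2 k, if_neg (by omega)]


/-- the reduced expression
`t((1/2)(ε_1 + ⋯ + ε_n)) = π^{B∨} (s_n ⋯ s_1)(s_n ⋯ s_2) ⋯ (s_n s_{n−1}) s_n`. -/
theorem t_half_sum_reduced_word (n : ℕ) (hn : 2 ≤ n) :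
    tU n ((1/2 : ℝ) • ∑ i ∈ Finset.Icc 1 n, (eps n i).1)
      = piBU n *
        ((List.range' 1 n).map (fun k => du n ((List.range' k (n - k + 1)).reverse))).prod := by
  refine Units.ext ?_
  refine LinearMap.ext fun g => ?_
  rw [Units.val_mul, Module.End.mul_apply, prod_blocks_one n (by omega) g]
  show tMap n _ g = piBMap n _
  rw [tMap_apply, piBMap_apply]
  have hb : bform n g ((1/2 : ℝ) • ∑ i ∈ Finset.Icc 1 n, (eps n i).1, 0)
      = (1/2) * ∑ i, g.1 i := by
    unfold bform
    rw [Finset.mul_sum]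
    refine Finset.sum_congr rfl fun k _ => ?_
    show g.1 k * ((1/2 : ℝ) • ∑ i ∈ Finset.Icc 1 n, (eps n i).1) k = 1/2 * g.1 k
    rw [Pi.smul_apply, sum_eps_apply n k, smul_eq_mul]
    ring
  rw [hb]
  refine Prod.ext ?_ ?_
  · funext i
    show g.1 i - (1/2 * ∑ i, g.1 i) * (cvec n).1 i = - -g.1 (Fin.rev (Fin.rev i))
    rw [Fin.rev_rev, neg_neg]
    show g.1 i - (1/2 * ∑ i, g.1 i) * 0 = g.1 i
    ring
  · show g.2 - (1/2 * ∑ i, g.1 i) * (cvec n).2 = g.2 + 1/2 * ∑ i, -g.1 (Fin.rev i)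
    have hs : ∑ i, -g.1 (Fin.rev i) = -∑ i, g.1 i := by
      rw [← Finset.sum_neg_distrib]
      exact Equiv.sum_comp (Equiv.mk Fin.rev Fin.rev Fin.rev_rev Fin.rev_rev)
        (fun i => -(g.1 i))
    rw [hs]
    show g.2 - (1/2 * ∑ i, g.1 i) * 1 = g.2 + 1/2 * -∑ i, g.1 i
    ring


end CvC
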